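/- arXiv:2511.00566 — 2 statements merged into one kernel-verified Lean document; each statement's English description precedes it below -/
import Mathlib

section
/- For every x ∈ X^±, the language of idempotent words of FIM(X) that avoid x is context-free. -/
/-- The symmetric alphabet `X^± = X ∪ X̄`, encoded as pairs (letter, sign). -/
abbrev Letter (X : Type) : Type := X × Bool

/-- Formal inverse of a letter. -/
def linv {X : Type} (a : Letter X) : Letter X := (a.1, !a.2)

/-- `wordInv v` is `v̄`: the reverse of `v` with every letter replaced by its inverse. -/
def wordInv {X : Type} (v : List (Letter X)) : List (Letter X) := v.reverse.map linv

/-- The vertex set of the Munn tree of `w`: reductions of all prefixes of `w` in FG(X). -/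
def munn {X : Type} (w : List (Letter X)) : Set (FreeGroup X) :=
  {g | ∃ p : List (Letter X), p <+: w ∧ FreeGroup.mk p = g}

/-- A word represents an idempotent of FIM(X) iff it reduces to 1 in FG(X). -/
def IsIdemWord {X : Type} (w : List (Letter X)) : Prop := FreeGroup.mk w = 1

/-- A word is reduced iff it has no adjacent mutually inverse letters. -/
def Reduced {X : Type} (w : List (Letter X)) : Prop :=
  List.Chain' (fun a b => b ≠ linv a) w

/-- The Munn tree of `w` contains the edge from (the reduced word) `p` to `p · a`. -/
def EdgeIn {X : Type} (w : List (Letter X)) (p : List (Letter X)) (a : Letter X) : Prop :=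
  Reduced (p ++ [a]) ∧ FreeGroup.mk p ∈ munn w ∧ FreeGroup.mk (p ++ [a]) ∈ munn w

/-- An idempotent word avoids `x` iff its Munn tree omits the edge `(ε, x)`. -/
def Avoids {X : Type} (w : List (Letter X)) (x : Letter X) : Prop := ¬ EdgeIn w [] x

/-- Equality in the free inverse monoid FIM(X): equality of Munn trees. -/
def EqFIM {X : Type} (u v : List (Letter X)) : Prop :=
  FreeGroup.mk u = FreeGroup.mk v ∧ munn u = munn v

/-- The alphabet `X^± ∪ {#}`. -/
abbrev HSym (X : Type) : Type := Letter X ⊕ Unit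

/-- The hashSym symbol. -/
def hashSym {X : Type} : HSym X := Sum.inr ()

/-- `encode u v = u # v̄`. -/
def encode {X : Type} (u v : List (Letter X)) : List (HSym X) :=
  u.map Sum.inl ++ hashSym :: (wordInv v).map Sum.inl


instance {T N : Type} [DecidableEq T] [DecidableEq N] : DecidableEq (ContextFreeRule T N) :=
  fun a b => decidable_of_iff (a.input = b.input ∧ a.output = b.output)
    (by cases a; cases b; simp)

/-- Interleaving `e₁x₁e₂x₂⋯e_mx_m`. -/
def interE {X : Type} (es : List (List (Letter X))) (xs : List (Letter X)) : List (Letter X) :=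
  (List.zipWith (fun e x => e ++ [x]) es xs).flatten

/-- Interleaving `y₁f₁y₂f₂⋯y_nf_n`. -/
def interF {X : Type} (ys : List (Letter X)) (fs : List (List (Letter X))) : List (Letter X) :=
  (List.zipWith (fun y f => y :: f) ys fs).flatten

/-- Derivability of a terminal word from a given nonterminal of a grammar. -/
def DerivesFrom {T : Type} (g : ContextFreeGrammar T) (n : g.NT) (w : List T) : Prop :=
  g.Derives [Symbol.nonterminal n] (w.map Symbol.terminal)

/-!
Read a word as a walk in the Cayley tree of `FG(X)` starting at `ε`. The idempotent words avoiding
`x` are the closed walks at `ε` that never visit the neighbour `x`. Cutting such a walk at its first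
return to `ε`, it is `a u a⁻¹ v` with `a ≠ x`, where `u` is a closed walk (based at `a`) that does
not go back to `ε`, i.e. a translate of a closed walk at `ε` avoiding `a⁻¹`, and `v` is again a
closed walk at `ε` avoiding `x`. So the languages `L_c` of closed walks avoiding `c`, one for each
`c ∈ X^±`, satisfy `L_c = ε + ∑_{a ≠ c} a L_{a⁻¹} a⁻¹ L_c`: a context-free grammar with `X^±` as
nonterminals. The tree structure enters through the branches `startsWith d` of `FG(X)`: a walk
can leave the branch through `d` only by passing through `ε`.
-/

namespace FreeGroup

variable {α : Type*} [DecidableEq α]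

theorem mk_singleton_inj {a b : α × Bool} : mk [a] = mk [b] ↔ a = b :=
  ⟨fun h => by simpa using congrArg toWord h, fun h => h ▸ rfl⟩

theorem mk_singleton_ne_one (a : α × Bool) : mk [a] ≠ 1 := fun h => by
  simpa using congrArg toWord h

theorem reduce_append_singleton_eq_nil_or_getElem?_zero :
    ∀ {L : List (α × Bool)}, IsReduced L → L ≠ [] → ∀ a : α × Bool,
      reduce (L ++ [a]) = [] ∨ (reduce (L ++ [a]))[0]? = L[0]?
  | [y], _, _, a => by
    by_cases h : y.1 = a.1 ∧ y.2 = !a.2 <;> simp [h]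
  | y :: z :: t, hL, _, a => by
    rw [isReduced_cons_cons] at hL
    have ih := reduce_append_singleton_eq_nil_or_getElem?_zero hL.2 (List.cons_ne_nil z t) a
    rw [List.cons_append, reduce.cons]
    rcases hr : reduce (z :: t ++ [a]) with _ | ⟨b, tl⟩
    · simp
    · rw [hr] at ih
      obtain rfl : b = z := by simpa using ih
      have : ¬(y.1 = b.1 ∧ y.2 = !b.2) := fun hc => by
        cases hy : y.2 <;> simp_all
      simp [this]

theorem mul_mk_singleton_mem_startsWith_iff {g : FreeGroup α} {a d : α × Bool} (hg : g ≠ 1)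
    (hga : g * mk [a] ≠ 1) : g * mk [a] ∈ startsWith d ↔ g ∈ startsWith d := by
  have hw : (g * mk [a]).toWord = reduce (g.toWord ++ [a]) := by
    rw [toWord_mul, toWord_mk, reduce_singleton]
  rcases reduce_append_singleton_eq_nil_or_getElem?_zero isReduced_toWord
    (mt toWord_eq_nil_iff.mp hg) a with h | h
  · exact absurd (toWord_eq_nil_iff.mp (hw.trans h)) hga
  · change (g * mk [a]).toWord[0]? = some d ↔ g.toWord[0]? = some d
    rw [hw, h]

theorem mul_mk_mem_startsWith {g : FreeGroup α} {d : α × Bool} (hg : g ∈ startsWith d) :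
    ∀ {u : List (α × Bool)}, (∀ q, q <+: u → g * mk q ≠ 1) → g * mk u ∈ startsWith d := by
  intro u
  induction u using List.reverseRecOn with
  | nil => intro; rwa [← one_eq_mk, mul_one]
  | append_singleton u a ih =>
    intro hu
    rw [← mul_mk, ← mul_assoc]
    have hu' : ∀ q, q <+: u → g * mk q ≠ 1 := fun q hq =>
      hu q (hq.trans (List.prefix_append u [a]))
    refine (mul_mk_singleton_mem_startsWith_iff (hu' u List.prefix_rfl) ?_).mpr (ih hu')
    rw [mul_assoc, mul_mk]
    exact hu _ List.prefix_rfl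

theorem exists_prefix_mk_eq_singleton_of_mk_mem_startsWith :
    ∀ {p : List (α × Bool)} {d : α × Bool}, mk p ∈ startsWith d →
      ∃ q, q <+: p ∧ mk q = mk [d] := by
  intro p d
  induction p using List.reverseRecOn with
  | nil => exact fun h => absurd rfl (startsWith.ne_one _ h)
  | append_singleton p a ih =>
    intro h
    rw [← mul_mk] at h
    by_cases hp : mk p = 1
    · rw [hp, one_mul] at h
      obtain rfl : a = d := by simpa [startsWith] using h
      exact ⟨p ++ [a], List.prefix_rfl, by rw [← mul_mk, hp, one_mul]⟩
    by_cases hpa : mk p * mk [a] = 1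
    · exact absurd hpa (startsWith.ne_one _ h)
    obtain ⟨q, hq, hqd⟩ := ih ((mul_mk_singleton_mem_startsWith_iff hp hpa).mp h)
    exact ⟨q, hq.trans (List.prefix_append p [a]), hqd⟩

end FreeGroup

namespace ContextFreeGrammar

variable {T N : Type*}

def symbolLanguage (σ : N → Language T) : Symbol T N → Language T
  | .terminal t => {[t]}
  | .nonterminal n => σ n

def sententialLanguage (σ : N → Language T) (u : List (Symbol T N)) : Language T :=
  (u.map (symbolLanguage σ)).prod

theorem sententialLanguage_append (σ : N → Language T) (u v : List (Symbol T N)) :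
    sententialLanguage σ (u ++ v) = sententialLanguage σ u * sententialLanguage σ v := by
  simp [sententialLanguage]

theorem sententialLanguage_singleton (σ : N → Language T) (s : Symbol T N) :
    sententialLanguage σ [s] = symbolLanguage σ s := by
  simp [sententialLanguage]

theorem mem_sententialLanguage_map_terminal (σ : N → Language T) (w : List T) :
    w ∈ sententialLanguage σ (w.map Symbol.terminal) := by
  induction w with
  | nil => exact Language.nil_mem_one
  | cons a w ih =>
    rw [List.map_cons, ← List.singleton_append, sententialLanguage_append,
      sententialLanguage_singleton]
    exact Language.append_mem_mul (Set.mem_singleton _) ih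

variable {g : ContextFreeGrammar T} {σ : g.NT → Language T}

theorem Derives.sententialLanguage_le
    (hσ : ∀ r ∈ g.rules, sententialLanguage σ r.output ≤ σ r.input)
    {u v : List (Symbol T g.NT)} (h : g.Derives u v) :
    sententialLanguage σ v ≤ sententialLanguage σ u := by
  induction h with
  | refl => exact le_rfl
  | tail _ huv ih =>
    obtain ⟨r, hr, hrw⟩ := huv
    obtain ⟨p, q, rfl, rfl⟩ := hrw.exists_parts
    refine le_trans ?_ ih
    simp only [sententialLanguage_append, sententialLanguage_singleton]
    exact mul_le_mul' (mul_le_mul' le_rfl (hσ r hr)) le_rfl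

theorem language_le_of_rules (hσ : ∀ r ∈ g.rules, sententialLanguage σ r.output ≤ σ r.input) :
    g.language ≤ σ g.initial := fun w hw => by
  simpa [sententialLanguage_singleton, symbolLanguage] using
    hw.sententialLanguage_le hσ (mem_sententialLanguage_map_terminal σ w)

end ContextFreeGrammar

open FreeGroup

variable {X : Type}

@[simp]
theorem linv_linv (a : Letter X) : linv (linv a) = a := by
  simp [linv]

theorem mk_linv (a : Letter X) : mk [linv a] = (mk [a])⁻¹ := by
  rw [inv_mk]
  rfl

theorem mk_cons_append_linv_cons {u : List (Letter X)} (hu : mk u = 1) (a : Letter X)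
    (t : List (Letter X)) : mk (a :: (u ++ linv a :: t)) = mk t := by
  rw [← List.singleton_append, ← List.singleton_append (l := t), ← mul_mk, ← mul_mk, ← mul_mk,
    hu, mk_linv, one_mul, mul_inv_cancel_left]

def loopsAvoiding (c : Letter X) : Language (Letter X) :=
  {u | mk u = 1 ∧ ∀ p, p <+: u → mk p ≠ mk [c]}

theorem avoids_iff {w : List (Letter X)} {x : Letter X} :
    Avoids w x ↔ ∀ p, p <+: w → mk p ≠ mk [x] :=
  ⟨fun h p hp hpx => h ⟨List.isChain_singleton _, ⟨[], List.nil_prefix, rfl⟩, p, hp, hpx⟩,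
    fun h ⟨_, _, p, hp, hpx⟩ => h p hp hpx⟩

variable [DecidableEq X]

theorem nil_mem_loopsAvoiding (c : Letter X) : [] ∈ loopsAvoiding c :=
  ⟨rfl, fun p hp => by
    rw [List.prefix_nil.mp hp, ← one_eq_mk]; exact (mk_singleton_ne_one c).symm⟩

theorem cons_append_cons_mem_loopsAvoiding {a c : Letter X} (hac : a ≠ c) {u v : List (Letter X)}
    (hu : u ∈ loopsAvoiding (linv a)) (hv : v ∈ loopsAvoiding c) :
    a :: (u ++ linv a :: v) ∈ loopsAvoiding c := by
  obtain ⟨hu1, hu⟩ := hu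
  obtain ⟨hv1, hv⟩ := hv
  refine ⟨(mk_cons_append_linv_cons hu1 a v).trans hv1, fun p hp => ?_⟩
  rcases List.prefix_cons_iff.mp hp with rfl | ⟨p, rfl, hpw⟩
  · rw [← one_eq_mk]; exact (mk_singleton_ne_one c).symm
  rcases List.prefix_or_prefix_of_prefix hpw (List.prefix_append u _) with hpu | ⟨t, rfl⟩
  · -- inside `u` the walk stays beyond `a`, so it cannot reach `c ≠ a`
    intro hpc
    have hp' : mk p = mk [linv a, c] := by
      rw [← List.singleton_append, ← mul_mk] at hpc
      rw [← List.singleton_append, ← mul_mk, mk_linv, ← hpc, inv_mul_cancel_left]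
    have hbranch : mk p ∈ startsWith (linv a) := by
      have : ¬((linv a).1 = c.1 ∧ (linv a).2 = !c.2) := fun h =>
        hac (Prod.ext h.1 (by simpa [linv] using h.2))
      simp [startsWith, hp', this]
    obtain ⟨q, hqp, hq⟩ := exists_prefix_mk_eq_singleton_of_mk_mem_startsWith hbranch
    exact hu q (hqp.trans hpu) hq
  rw [List.prefix_append_right_inj] at hpw
  rcases List.prefix_cons_iff.mp hpw with rfl | ⟨t, rfl, ht⟩
  · rw [List.append_nil, ← List.singleton_append, ← mul_mk, hu1, mul_one, Ne, mk_singleton_inj]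
    exact hac
  · rw [mk_cons_append_linv_cons hu1]; exact hv t ht

theorem exists_eq_append_linv_cons_of_mk_cons_eq_one {a : Letter X} {w : List (Letter X)}
    (h : mk (a :: w) = 1) :
    ∃ u v, w = u ++ linv a :: v ∧ u ∈ loopsAvoiding (linv a) ∧ mk v = 1 := by
  have hex : ∃ n, mk (a :: w.take n) = 1 := ⟨w.length, by rwa [List.take_length]⟩
  -- the first return of the walk to `ε`
  set n := Nat.find hex
  have hn : mk (a :: w.take n) = 1 := Nat.find_spec hex
  obtain ⟨u, b, hub⟩ : ∃ u b, w.take n = u ++ [b] := by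
    rcases List.eq_nil_or_concat (w.take n) with h0 | h0
    · rw [h0] at hn; exact absurd hn (mk_singleton_ne_one a)
    · simpa using h0
  have hrun : ∀ q, q <+: u → mk [a] * mk q ≠ 1 := fun q hq => by
    have hlen := hub ▸ List.length_take_le n w
    rw [mul_mk, List.singleton_append, List.prefix_iff_eq_take.mp
      ((hq.trans (List.prefix_append u [b])).trans (hub ▸ List.take_prefix n w))]
    refine Nat.find_min hex ?_
    simp only [List.length_append, List.length_singleton] at hlen
    have := hq.length_le
    omega
  have hbranch : mk (a :: u) ∈ startsWith a := by
    rw [← List.singleton_append, ← mul_mk]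
    exact mul_mk_mem_startsWith (by simp [startsWith]) hrun
  have hau : mk (a :: u) = mk [linv b] := by
    rw [hub, ← List.cons_append, ← mul_mk] at hn
    rw [mk_linv]
    exact eq_inv_of_mul_eq_one_left hn
  obtain rfl : b = linv a := by
    have hb : linv b = a := by simpa [hau, startsWith] using hbranch
    rw [← hb, linv_linv]
  have hu1 : mk u = 1 := by
    rw [linv_linv, ← List.singleton_append, ← mul_mk, mul_eq_left] at hau
    exact hau
  refine ⟨u, w.drop n, ?_, ⟨hu1, fun q hq hqa => hrun q hq ?_⟩, ?_⟩
  · nth_rewrite 1 [← List.take_append_drop n w]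
    rw [hub, List.append_assoc, List.singleton_append]
  · rw [hqa, mk_linv, mul_inv_cancel]
  · rwa [← List.take_append_drop n w, ← List.cons_append, ← mul_mk, hn, one_mul] at h

theorem cons_mem_loopsAvoiding_iff {a c : Letter X} {w : List (Letter X)} :
    a :: w ∈ loopsAvoiding c ↔
      a ≠ c ∧ ∃ u v, w = u ++ linv a :: v ∧ u ∈ loopsAvoiding (linv a) ∧ v ∈ loopsAvoiding c := by
  refine ⟨fun ⟨hw, hpre⟩ => ?_, fun ⟨hac, u, v, hw, hu, hv⟩ =>
    hw ▸ cons_append_cons_mem_loopsAvoiding hac hu hv⟩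
  refine ⟨fun hac => hpre [a] (by simp) (by rw [hac]), ?_⟩
  obtain ⟨u, v, rfl, hu, hv⟩ := exists_eq_append_linv_cons_of_mk_cons_eq_one hw
  refine ⟨u, v, rfl, hu, hv, fun q hq => ?_⟩
  rw [← mk_cons_append_linv_cons hu.1 a]
  exact hpre _ (by simpa using hq)

section Grammar

variable [Fintype X]

def nilRule (c : Letter X) : ContextFreeRule (Letter X) (Letter X) := ⟨c, []⟩

def loopRule (c a : Letter X) : ContextFreeRule (Letter X) (Letter X) :=
  ⟨c, [.terminal a, .nonterminal (linv a), .terminal (linv a), .nonterminal c]⟩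

variable (X) in
def loopRules : Finset (ContextFreeRule (Letter X) (Letter X)) :=
  Finset.univ.image nilRule ∪
    (Finset.univ.filter fun p : Letter X × Letter X => p.2 ≠ p.1).image fun p => loopRule p.1 p.2

theorem mem_loopRules_iff {r : ContextFreeRule (Letter X) (Letter X)} :
    r ∈ loopRules X ↔ (∃ c, nilRule c = r) ∨ ∃ c a, a ≠ c ∧ loopRule c a = r := by
  simp [loopRules]

def loopGrammar (x : Letter X) : ContextFreeGrammar (Letter X) := ⟨Letter X, x, loopRules X⟩

open ContextFreeGrammar in
theorem sententialLanguage_output_le_of_mem_loopRules {r : ContextFreeRule (Letter X) (Letter X)}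
    (hr : r ∈ loopRules X) : sententialLanguage loopsAvoiding r.output ≤ loopsAvoiding r.input := by
  rcases mem_loopRules_iff.mp hr with ⟨c, rfl⟩ | ⟨c, a, hac, rfl⟩
  · intro w hw
    obtain rfl : w = [] := hw
    exact nil_mem_loopsAvoiding c
  · intro w hw
    simp only [loopRule, sententialLanguage, symbolLanguage, List.map_cons, List.map_nil,
      List.prod_cons, List.prod_nil, mul_one] at hw
    obtain ⟨_, rfl, _, huv, rfl⟩ := Language.mem_mul.mp hw
    obtain ⟨u, hu, _, hv', rfl⟩ := Language.mem_mul.mp huv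
    obtain ⟨_, rfl, v, hv, rfl⟩ := Language.mem_mul.mp hv'
    exact cons_append_cons_mem_loopsAvoiding hac hu hv

theorem loopGrammar_language_le (x : Letter X) :
    (loopGrammar x).language ≤ loopsAvoiding x :=
  ContextFreeGrammar.language_le_of_rules fun _ => sententialLanguage_output_le_of_mem_loopRules

theorem derivesFrom_loopGrammar_of_mem (x : Letter X) :
    ∀ {c : Letter X} {w : List (Letter X)}, w ∈ loopsAvoiding c →
      DerivesFrom (loopGrammar x) c w
  | c, [], _ =>
    ContextFreeGrammar.Produces.single ⟨nilRule c, mem_loopRules_iff.mpr (Or.inl ⟨c, rfl⟩),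
      ContextFreeRule.Rewrites.input_output⟩
  | c, a :: w, h => by
    obtain ⟨hac, u, v, hw, hu, hv⟩ := cons_mem_loopsAvoiding_iff.mp h
    have hstep : (loopGrammar x).Produces [.nonterminal c] (loopRule c a).output :=
      ⟨loopRule c a, mem_loopRules_iff.mpr (Or.inr ⟨c, a, hac, rfl⟩),
        ContextFreeRule.Rewrites.input_output⟩
    have du := ((derivesFrom_loopGrammar_of_mem x hu).append_right
      [.terminal (linv a), .nonterminal c]).append_left [.terminal a]
    have dv := (derivesFrom_loopGrammar_of_mem x hv).append_left
      ((a :: (u ++ [linv a])).map Symbol.terminal)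
    unfold DerivesFrom
    rw [hw]
    refine hstep.trans_derives (du.trans ?_)
    simpa using dv
termination_by _ w => w.length
decreasing_by all_goals (subst hw; simp <;> omega)

end Grammar

theorem idemAvoiding_isContextFree_general {X : Type} [Fintype X]
    (x : Letter X) :
    Language.IsContextFree
      ({w : List (Letter X) | IsIdemWord w ∧ Avoids w x} : Language (Letter X)) := by
  classical
  have hL : {w : List (Letter X) | IsIdemWord w ∧ Avoids w x} = loopsAvoiding x := by
    ext w
    exact and_congr Iff.rfl avoids_iff
  rw [hL]
  exact ⟨loopGrammar x, (loopGrammar_language_le x).antisymm fun w hw =>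
    (ContextFreeGrammar.mem_language_iff _ w).mpr (derivesFrom_loopGrammar_of_mem x hw)⟩

/-- For every `x ∈ X^±`, the language of idempotent words avoiding `x` is context-free. -/
theorem idemAvoiding_isContextFree {X : Type} [Fintype X] [DecidableEq X]
    (x : Letter X) :
    Language.IsContextFree
      ({w : List (Letter X) | IsIdemWord w ∧ Avoids w x} : Language (Letter X)) :=
  idemAvoiding_isContextFree_general x
end

section
/- Two words u, v over X^± represent the same element of the free inverse monoid FIM(X) if and only if their Munn trees coincide: that is, u and v reduce to the same element of the free group FG(X), and the sets of free-group elements represented by the prefixes of u and of v generate the same subtree of the Cayley graph (equivalently, the sets of reduced prefixes of u and of v have the same prefix-closure). -/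
/-- The Vagner relations: `w w⁻¹ w = w` and `(w w⁻¹)(z z⁻¹) = (z z⁻¹)(w w⁻¹)`. -/
def vagnerRel {X : Type} : FreeMonoid (Letter X) → FreeMonoid (Letter X) → Prop :=
  fun a b =>
    (∃ w : List (Letter X),
        a = FreeMonoid.ofList (w ++ wordInv w ++ w) ∧ b = FreeMonoid.ofList w) ∨
    (∃ w z : List (Letter X),
        a = FreeMonoid.ofList (w ++ wordInv w ++ (z ++ wordInv z)) ∧
        b = FreeMonoid.ofList (z ++ wordInv z ++ (w ++ wordInv w)))

/-- The Vagner congruence on the free monoid on `X^±`, presenting FIM(X). -/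
def vagnerCon (X : Type) : Con (FreeMonoid (Letter X)) := conGen vagnerRel

/-!
The pair (reduction, Munn tree) is invariant under the Vagner relations, because
`munn (u ++ v)` is `munn u` together with the translate of `munn v` by `u`. Conversely, in
FIM(X) every word `u` equals `E_u · red u`, where `E_u` is the product of the idempotents `p p̄`
over the reduced prefixes `p` of `u`. Appending a letter `a` either extends `red u`, or
`red u = r ā` and `r ā a = (r ā)(r ā)⁻¹ r` in FIM(X), whose idempotent factor is already in
`E_u`. The idempotents `p p̄` commute, so `E_u` depends only on the set `munn u`.
-/

namespace List

theorem prefix_append_cases {α : Type*} {p u v : List α} (h : p <+: u ++ v) :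
    p <+: u ∨ ∃ q, q <+: v ∧ p = u ++ q := by
  rcases le_or_gt p.length u.length with hl | hl
  · exact Or.inl (prefix_of_prefix_length_le h (u.prefix_append v) hl)
  · obtain ⟨q, rfl⟩ := prefix_of_prefix_length_le (u.prefix_append v) h hl.le
    exact Or.inr ⟨q, (prefix_append_right_inj u).mp h, rfl⟩

section IdempotentProd

variable {M : Type*} [Monoid M] {S : Set M}

theorem prod_mul_eq_of_mem (hidem : ∀ x ∈ S, IsIdempotentElem x)
    (hcomm : ∀ x ∈ S, ∀ y ∈ S, Commute x y) {l : List M} (hl : ∀ y ∈ l, y ∈ S) {x : M}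
    (hx : x ∈ l) : l.prod * x = l.prod := by
  induction l with
  | nil => simp at hx
  | cons a t ih =>
    have ht : ∀ y ∈ t, y ∈ S := fun y hy => hl y (mem_cons_of_mem a hy)
    rw [prod_cons, mul_assoc]
    rcases mem_cons.mp hx with rfl | hxt
    · have hcomm_t : Commute x t.prod :=
        Commute.list_prod_right t x fun y hy => hcomm x (hl x mem_cons_self) y (ht y hy)
      rw [← hcomm_t.eq, ← mul_assoc, hidem x (hl x mem_cons_self)]
    · rw [ih ht hxt]

theorem prod_mul_prod_eq_of_subset (hidem : ∀ x ∈ S, IsIdempotentElem x)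
    (hcomm : ∀ x ∈ S, ∀ y ∈ S, Commute x y) {l l' : List M} (hl : ∀ y ∈ l, y ∈ S)
    (hl' : l' ⊆ l) : l.prod * l'.prod = l.prod := by
  induction l' with
  | nil => simp
  | cons x t ih =>
    rw [prod_cons, ← mul_assoc, prod_mul_eq_of_mem hidem hcomm hl (hl' mem_cons_self),
      ih (cons_subset.mp hl').2]

theorem prod_eq_of_subset_of_subset (hidem : ∀ x ∈ S, IsIdempotentElem x)
    (hcomm : ∀ x ∈ S, ∀ y ∈ S, Commute x y) {l₁ l₂ : List M} (hl₁ : ∀ y ∈ l₁, y ∈ S)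
    (h₁₂ : l₁ ⊆ l₂) (h₂₁ : l₂ ⊆ l₁) : l₁.prod = l₂.prod := by
  have hl₂ : ∀ y ∈ l₂, y ∈ S := fun y hy => hl₁ y (h₂₁ hy)
  calc l₁.prod = l₁.prod * l₂.prod := (prod_mul_prod_eq_of_subset hidem hcomm hl₁ h₂₁).symm
    _ = l₂.prod * l₁.prod :=
      Commute.list_prod_left _ _ fun x hx => Commute.list_prod_right _ _ fun y hy =>
        hcomm x (hl₁ x hx) y (hl₂ y hy)
    _ = l₂.prod := prod_mul_prod_eq_of_subset hidem hcomm hl₂ h₁₂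

end IdempotentProd

end List

namespace FreeGroup

variable {α : Type*} [DecidableEq α]

theorem IsReduced.append_singleton_or {r : List (α × Bool)} (hr : IsReduced r) (a : α × Bool) :
    IsReduced (r ++ [a]) ∨ ∃ r₀, r = r₀ ++ [(a.1, !a.2)] := by
  rcases r.eq_nil_or_concat' with rfl | ⟨r₀, b, rfl⟩
  · exact Or.inl IsReduced.singleton
  by_cases hba : b.1 = a.1 → b.2 = a.2
  · exact Or.inl (hr.append_overlap (isReduced_cons_cons.mpr ⟨hba, .singleton⟩) (by simp))
  · refine Or.inr ⟨r₀, ?_⟩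
    obtain ⟨b₁, b₂⟩ := b
    obtain ⟨a₁, a₂⟩ := a
    obtain ⟨rfl, hne⟩ := Classical.not_imp.mp hba
    cases a₂ <;> cases b₂ <;> simp_all

theorem reduce_append_inv_singleton {r₀ : List (α × Bool)} (hr₀ : IsReduced r₀) (a : α × Bool) :
    reduce (r₀ ++ [(a.1, !a.2)] ++ [a]) = r₀ := by
  have hstep : Red.Step (r₀ ++ (a.1, !a.2) :: (a.1, a.2) :: []) (r₀ ++ []) := Red.Step.not_rev
  rw [List.append_assoc, reduce.Step.eq (by simpa using hstep), hr₀.reduce_eq]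

end FreeGroup

section MunnTree

variable {X : Type}

theorem wordInv_eq_invRev (w : List (Letter X)) : wordInv w = FreeGroup.invRev w := by
  simp [wordInv, FreeGroup.invRev, List.map_reverse, linv]

theorem mk_wordInv (w : List (Letter X)) : FreeGroup.mk (wordInv w) = (FreeGroup.mk w)⁻¹ := by
  rw [wordInv_eq_invRev, FreeGroup.inv_mk]

theorem wordInv_append (u v : List (Letter X)) : wordInv (u ++ v) = wordInv v ++ wordInv u := by
  simp only [wordInv_eq_invRev, FreeGroup.invRev_append]

theorem wordInv_wordInv (w : List (Letter X)) : wordInv (wordInv w) = w := by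
  simp only [wordInv_eq_invRev, FreeGroup.invRev_invRev]

theorem mk_append_wordInv (w : List (Letter X)) : FreeGroup.mk (w ++ wordInv w) = 1 := by
  rw [← FreeGroup.mul_mk, mk_wordInv, mul_inv_cancel]

theorem munn_append (u v : List (Letter X)) :
    munn (u ++ v) = munn u ∪ (FreeGroup.mk u * ·) '' munn v := by
  ext g
  constructor
  · rintro ⟨p, hp, rfl⟩
    rcases List.prefix_append_cases hp with hpu | ⟨q, hq, rfl⟩
    · exact Or.inl ⟨p, hpu, rfl⟩
    · exact Or.inr ⟨FreeGroup.mk q, ⟨q, hq, rfl⟩, FreeGroup.mul_mk⟩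
  · rintro (⟨p, hp, rfl⟩ | ⟨_, ⟨q, hq, rfl⟩, rfl⟩)
    · exact ⟨p, hp.trans (u.prefix_append v), rfl⟩
    · exact ⟨u ++ q, (List.prefix_append_right_inj u).mpr hq, FreeGroup.mul_mk.symm⟩

theorem munn_append_of_mk_eq_one {e : List (Letter X)} (he : FreeGroup.mk e = 1)
    (w : List (Letter X)) : munn (e ++ w) = munn e ∪ munn w := by
  simp [munn_append, he]

theorem image_munn_wordInv (w : List (Letter X)) :
    (FreeGroup.mk w * ·) '' munn (wordInv w) = munn w := by
  ext g
  constructor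
  · rintro ⟨_, ⟨p, ⟨s, hs⟩, rfl⟩, rfl⟩
    have hw : w = wordInv s ++ wordInv p := by rw [← wordInv_append, hs, wordInv_wordInv]
    refine ⟨wordInv s, ⟨wordInv p, hw.symm⟩, ?_⟩
    simp only [hw, ← FreeGroup.mul_mk, mk_wordInv p, inv_mul_cancel_right]
  · rintro ⟨p, ⟨s, rfl⟩, rfl⟩
    refine ⟨_, ⟨wordInv s, ⟨wordInv p, (wordInv_append p s).symm⟩, rfl⟩, ?_⟩
    simp only [mk_wordInv, ← FreeGroup.mul_mk, mul_inv_cancel_right]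

theorem munn_append_wordInv (w : List (Letter X)) : munn (w ++ wordInv w) = munn w := by
  rw [munn_append, image_munn_wordInv, Set.union_self]

variable (X) in
def munnCon : Con (FreeMonoid (Letter X)) where
  r a b := FreeGroup.mk a.toList = FreeGroup.mk b.toList ∧ munn a.toList = munn b.toList
  iseqv := ⟨fun _ => ⟨rfl, rfl⟩, fun h => ⟨h.1.symm, h.2.symm⟩,
    fun h₁ h₂ => ⟨h₁.1.trans h₂.1, h₁.2.trans h₂.2⟩⟩
  mul' := by
    rintro a b c d ⟨hmk₁, hmunn₁⟩ ⟨hmk₂, hmunn₂⟩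
    simp only [FreeMonoid.toList_mul, ← FreeGroup.mul_mk, munn_append, hmk₁, hmk₂, hmunn₁, hmunn₂,
      and_self]

theorem munnCon_ofList_iff {u v : List (Letter X)} :
    munnCon X (FreeMonoid.ofList u) (FreeMonoid.ofList v) ↔
      FreeGroup.mk u = FreeGroup.mk v ∧ munn u = munn v :=
  Iff.rfl

theorem vagnerCon_le_munnCon : vagnerCon X ≤ munnCon X := by
  refine Con.conGen_le.mpr ?_
  rintro a b (⟨w, ha, hb⟩ | ⟨w, z, ha, hb⟩) <;> rw [ha, hb, munnCon_ofList_iff]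
  · rw [← FreeGroup.mul_mk, mk_append_wordInv, one_mul,
      munn_append_of_mk_eq_one (mk_append_wordInv w), munn_append_wordInv, Set.union_self]
    exact ⟨rfl, rfl⟩
  · rw [← FreeGroup.mul_mk, ← FreeGroup.mul_mk (L₁ := z ++ wordInv z), mk_append_wordInv,
      mk_append_wordInv, munn_append_of_mk_eq_one (mk_append_wordInv w),
      munn_append_of_mk_eq_one (mk_append_wordInv z), munn_append_wordInv, munn_append_wordInv,
      Set.union_comm]
    exact ⟨rfl, rfl⟩

end MunnTree

abbrev FIM (X : Type) : Type := (vagnerCon X).Quotient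

namespace FIM

variable {X : Type}

def mk (w : List (Letter X)) : FIM X := (FreeMonoid.ofList w : FreeMonoid (Letter X))

theorem mk_eq_mk_iff {u v : List (Letter X)} :
    mk u = mk v ↔ vagnerCon X (FreeMonoid.ofList u) (FreeMonoid.ofList v) :=
  Con.eq _

@[simp] theorem mk_nil : mk ([] : List (Letter X)) = 1 := rfl

theorem mk_append (u v : List (Letter X)) : mk (u ++ v) = mk u * mk v := by
  simp only [mk, FreeMonoid.ofList_append, Con.coe_mul]

def idem (w : List (Letter X)) : FIM X := mk (w ++ wordInv w)

theorem idem_mul_mk_self (w : List (Letter X)) : idem w * mk w = mk w := by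
  rw [idem, ← mk_append]
  exact mk_eq_mk_iff.mpr (ConGen.Rel.of _ _ (Or.inl ⟨w, rfl, rfl⟩))

theorem commute_idem (w z : List (Letter X)) : Commute (idem w) (idem z) := by
  rw [Commute, SemiconjBy, idem, idem, ← mk_append, ← mk_append]
  exact mk_eq_mk_iff.mpr (ConGen.Rel.of _ _ (Or.inr ⟨w, z, rfl, rfl⟩))

theorem isIdempotentElem_idem (w : List (Letter X)) : IsIdempotentElem (idem w) := by
  rw [IsIdempotentElem]
  nth_rw 2 [idem]
  rw [mk_append, ← mul_assoc, idem_mul_mk_self, ← mk_append, idem]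

theorem idem_append_mul_mk (r s : List (Letter X)) :
    idem (r ++ s) * mk r = mk (r ++ s ++ wordInv s) := by
  have hr : mk r * idem (wordInv r) = mk r := by
    rw [idem, wordInv_wordInv, ← mk_append, ← List.append_assoc, mk_append, ← idem,
      idem_mul_mk_self]
  calc idem (r ++ s) * mk r = mk r * idem s * idem (wordInv r) := by
        simp only [idem, wordInv_append, wordInv_wordInv, mk_append, mul_assoc]
    _ = mk r * idem (wordInv r) * idem s := by
        rw [mul_assoc, (commute_idem _ _).eq, ← mul_assoc]
    _ = mk (r ++ s ++ wordInv s) := by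
        rw [hr, idem, ← mk_append, List.append_assoc]

theorem isIdempotentElem_of_mem_range_idem :
    ∀ x ∈ Set.range (idem (X := X)), IsIdempotentElem x := by
  rintro _ ⟨w, rfl⟩
  exact isIdempotentElem_idem w

theorem commute_of_mem_range_idem :
    ∀ x ∈ Set.range (idem (X := X)), ∀ y ∈ Set.range (idem (X := X)), Commute x y := by
  rintro _ ⟨w, rfl⟩ _ ⟨z, rfl⟩
  exact commute_idem w z

section NormalForm

variable [DecidableEq X]

theorem mk_append_singleton_of_isReduced {r : List (Letter X)} (hr : FreeGroup.IsReduced r)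
    (a : Letter X) :
    mk (r ++ [a]) =
      idem r * idem (FreeGroup.reduce (r ++ [a])) * mk (FreeGroup.reduce (r ++ [a])) := by
  rcases hr.append_singleton_or a with hra | ⟨r₀, rfl⟩
  · rw [hra.reduce_eq, mul_assoc, idem_mul_mk_self, mk_append, ← mul_assoc, idem_mul_mk_self]
  · have hr₀ : FreeGroup.IsReduced r₀ := hr.infix (List.prefix_append r₀ _).isInfix
    have hinv : [a] = wordInv [(a.1, !a.2)] := by simp [wordInv, linv]
    rw [FreeGroup.reduce_append_inv_singleton hr₀, mul_assoc, idem_mul_mk_self,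
      idem_append_mul_mk, ← hinv]

def treeIdems (u : List (Letter X)) : List (FIM X) :=
  u.inits.map fun p => idem (FreeGroup.reduce p)

theorem mem_range_of_mem_treeIdems {u : List (Letter X)} :
    ∀ x ∈ treeIdems u, x ∈ Set.range (idem (X := X)) := by
  intro x hx
  obtain ⟨p, -, rfl⟩ := List.mem_map.mp hx
  exact ⟨_, rfl⟩

theorem treeIdems_append_singleton (u : List (Letter X)) (a : Letter X) :
    treeIdems (u ++ [a]) = treeIdems u ++ [idem (FreeGroup.reduce (u ++ [a]))] := by
  simp [treeIdems, List.inits_append]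

theorem treeIdems_subset {u v : List (Letter X)} (h : munn u ⊆ munn v) :
    treeIdems u ⊆ treeIdems v := by
  intro x hx
  obtain ⟨p, hp, rfl⟩ := List.mem_map.mp hx
  obtain ⟨q, hq, hqp⟩ := h ⟨p, (List.mem_inits p u).mp hp, rfl⟩
  exact List.mem_map.mpr ⟨q, (List.mem_inits q v).mpr hq, by rw [FreeGroup.reduce.sound hqp]⟩

theorem mk_eq_prod_treeIdems_mul_mk_reduce (u : List (Letter X)) :
    mk u = (treeIdems u).prod * mk (FreeGroup.reduce u) := by
  induction u using List.reverseRecOn with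
  | nil => simp [treeIdems, idem, wordInv]
  | append_singleton u a ih =>
    have hmem : idem (FreeGroup.reduce u) ∈ treeIdems u :=
      List.mem_map_of_mem ((List.mem_inits u u).mpr (List.prefix_refl u))
    have hred : FreeGroup.reduce (FreeGroup.reduce u ++ [a]) = FreeGroup.reduce (u ++ [a]) := by
      simpa using FreeGroup.reduce_append_reduce_reduce (L₁ := u) (L₂ := [a])
    calc mk (u ++ [a]) = (treeIdems u).prod * mk (FreeGroup.reduce u ++ [a]) := by
          rw [mk_append, ih, mul_assoc, ← mk_append]
      _ = (treeIdems u).prod * idem (FreeGroup.reduce u) * idem (FreeGroup.reduce (u ++ [a])) *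
            mk (FreeGroup.reduce (u ++ [a])) := by
          rw [mk_append_singleton_of_isReduced (FreeGroup.isReduced_iff_reduce_eq.mpr
            FreeGroup.reduce.idem), hred, ← mul_assoc, ← mul_assoc]
      _ = (treeIdems (u ++ [a])).prod * mk (FreeGroup.reduce (u ++ [a])) := by
          rw [List.prod_mul_eq_of_mem isIdempotentElem_of_mem_range_idem
            commute_of_mem_range_idem mem_range_of_mem_treeIdems hmem,
            treeIdems_append_singleton, List.prod_append, List.prod_singleton]

theorem prod_treeIdems_eq_of_munn_eq {u v : List (Letter X)} (h : munn u = munn v) :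
    (treeIdems u).prod = (treeIdems v).prod :=
  List.prod_eq_of_subset_of_subset isIdempotentElem_of_mem_range_idem commute_of_mem_range_idem
    mem_range_of_mem_treeIdems (treeIdems_subset h.le) (treeIdems_subset h.ge)

end NormalForm

end FIM

theorem eq_fim_iff_munn_general {X : Type} (u v : List (Letter X)) :
    vagnerCon X (FreeMonoid.ofList u) (FreeMonoid.ofList v) ↔
      (FreeGroup.mk u = FreeGroup.mk v ∧ munn u = munn v) := by
  classical
  refine ⟨fun h => vagnerCon_le_munnCon h, fun ⟨hmk, hmunn⟩ => ?_⟩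
  rw [← FIM.mk_eq_mk_iff, FIM.mk_eq_prod_treeIdems_mul_mk_reduce u,
    FIM.mk_eq_prod_treeIdems_mul_mk_reduce v, FIM.prod_treeIdems_eq_of_munn_eq hmunn,
    FreeGroup.reduce.sound hmk]

/-- `u = v` in FIM(X) iff their Munn trees coincide: same reduction in FG(X) and the
same (prefix-closed) vertex sets. -/
theorem eq_fim_iff_munn {X : Type} [Fintype X] (u v : List (Letter X)) :
    vagnerCon X (FreeMonoid.ofList u) (FreeMonoid.ofList v) ↔
      (FreeGroup.mk u = FreeGroup.mk v ∧ munn u = munn v) :=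
  eq_fim_iff_munn_general u v
end
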